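/- For every a ∈ M, crd(a) ⊆ dcl_{R^eq}(a). -/

import Mathlib

open FirstOrder FirstOrder.Language

namespace Paper

/-- Two tuples have the same complete (first-order) type over ∅. -/
def SameType (L : FirstOrder.Language.{0,0}) (M : Type) [L.Structure M] {α : Type} (a b : α → M) : Prop :=
  ∀ φ : L.Formula α, φ.Realize a ↔ φ.Realize b

/-- Two tuples have the same complete type over the parameter set `C`. -/
def SameTypeOver (L : FirstOrder.Language.{0,0}) (M : Type) [L.Structure M] {α : Type} (a b : α → M)
    (C : Set M) : Prop :=
  ∀ (m : ℕ) (c : Fin m → M), (∀ i, c i ∈ C) →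
    ∀ φ : L.Formula (α ⊕ Fin m), φ.Realize (Sum.elim a c) ↔ φ.Realize (Sum.elim b c)

/-- The (model-theoretic) algebraic closure of `A` in `M`. -/
def acl (L : FirstOrder.Language.{0,0}) (M : Type) [L.Structure M] (A : Set M) : Set M :=
  { x | ∃ (m : ℕ) (c : Fin m → M), (∀ i, c i ∈ A) ∧
      ∃ φ : L.Formula (Fin 1 ⊕ Fin m),
        φ.Realize (Sum.elim (fun _ => x) c) ∧
        {y : M | φ.Realize (Sum.elim (fun _ => y) c)}.Finite }

/-- The definable closure of `A` in `M`. -/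
def dcl (L : FirstOrder.Language.{0,0}) (M : Type) [L.Structure M] (A : Set M) : Set M :=
  { x | ∃ (m : ℕ) (c : Fin m → M), (∀ i, c i ∈ A) ∧
      ∃ φ : L.Formula (Fin 1 ⊕ Fin m),
        {y : M | φ.Realize (Sum.elim (fun _ => y) c)} = {x} }

/-- A set of tuples is ∅-definable. -/
def ZDef (L : FirstOrder.Language.{0,0}) (M : Type) [L.Structure M] {α : Type} (S : Set (α → M)) : Prop :=
  ∃ φ : L.Formula α, ∀ v, v ∈ S ↔ φ.Realize v

/-- A subset of the universe is ∅-definable. -/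
def ZDefSet (L : FirstOrder.Language.{0,0}) (M : Type) [L.Structure M] (D : Set M) : Prop :=
  ∃ φ : L.Formula (Fin 1), ∀ x : M, x ∈ D ↔ φ.Realize (fun _ => x)

/-- A finite relational vocabulary. -/
def FiniteRelational (L : FirstOrder.Language.{0,0}) : Prop :=
  (∀ n, IsEmpty (L.Functions n)) ∧ (∀ n, Finite (L.Relations n)) ∧
    {n | Nonempty (L.Relations n)}.Finite

/-- A finite relational vocabulary of maximal arity at most 2. -/
def BinaryLanguage (L : FirstOrder.Language.{0,0}) : Prop :=
  FiniteRelational L ∧ ∀ n, 3 ≤ n → IsEmpty (L.Relations n)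

/-- Every isomorphism between finite substructures extends to an automorphism. -/
def Homogeneous (L : FirstOrder.Language.{0,0}) (M : Type) [L.Structure M] : Prop :=
  ∀ (A B : L.Substructure M), (A : Set M).Finite → (B : Set M).Finite →
    ∀ f : ↥A ≃[L] ↥B, ∃ g : M ≃[L] M, ∀ a : ↥A, g (a : M) = (f a : M)

/-- ω-homogeneity. -/
def OmegaHomogeneous (L : FirstOrder.Language.{0,0}) (M : Type) [L.Structure M] : Prop :=
  ∀ (n : ℕ) (a b : Fin n → M) (a' : M), SameType L M a b →
    ∃ b' : M, SameType L M (Fin.snoc a a') (Fin.snoc b b')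

/-- ω-categoricity of `Th(M)`: there is exactly one countably infinite model up to
isomorphism. -/
def OmegaCategorical (L : FirstOrder.Language.{0,0}) (M : Type) [L.Structure M] : Prop :=
  (∃ (N : Type) (instN : L.Structure N),
    letI := instN
    N ⊨ L.completeTheory M ∧ Countable N ∧ Infinite N) ∧
  ∀ (N₁ N₂ : Type) (i₁ : L.Structure N₁) (i₂ : L.Structure N₂),
    letI := i₁
    letI := i₂
    N₁ ⊨ L.completeTheory M → N₂ ⊨ L.completeTheory M →
    Countable N₁ → Infinite N₁ → Countable N₂ → Infinite N₂ → Nonempty (N₁ ≃[L] N₂)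

/-- `φ(x̄, b̄)` divides over `B`: in some elementary extension there is a `B`-indiscernible
sequence of realizations of `tp(b̄/B)` starting a `k`-inconsistent family of instances. -/
def Divides (L : FirstOrder.Language.{0,0}) (M : Type) [L.Structure M] {n m : ℕ}
    (φ : L.Formula (Fin n ⊕ Fin m)) (b : Fin m → M) (B : Set M) : Prop :=
  ∃ (N : Type) (instN : L.Structure N),
    letI := instN
    ∃ (e : M ↪ₑ[L] N) (k : ℕ) (seq : ℕ → Fin m → N),
      2 ≤ k ∧
      SameTypeOver L N (seq 0) (⇑e ∘ b) (⇑e '' B) ∧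
      (∀ (r : ℕ) (s t : Fin r → ℕ), StrictMono s → StrictMono t →
        SameTypeOver L N (fun p : Fin r × Fin m => seq (s p.1) p.2)
          (fun p : Fin r × Fin m => seq (t p.1) p.2) (⇑e '' B)) ∧
      ∀ F : Finset ℕ, F.card = k →
        ¬∃ a : Fin n → N, ∀ i ∈ F, φ.Realize (Sum.elim a (seq i))

/-- `φ(x̄, b̄)` forks over `B`: it implies a finite disjunction of formulas dividing over `B`. -/
def Forks (L : FirstOrder.Language.{0,0}) (M : Type) [L.Structure M] {n m : ℕ}
    (φ : L.Formula (Fin n ⊕ Fin m)) (b : Fin m → M) (B : Set M) : Prop :=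
  ∃ (r : ℕ) (ms : Fin r → ℕ) (ψ : ∀ i : Fin r, L.Formula (Fin n ⊕ Fin (ms i)))
    (d : ∀ i : Fin r, Fin (ms i) → M),
    (∀ i, Divides L M (ψ i) (d i) B) ∧
    ∀ (N : Type) (instN : L.Structure N),
      letI := instN
      ∀ (e : M ↪ₑ[L] N) (a : Fin n → N),
        φ.Realize (Sum.elim a (⇑e ∘ b)) → ∃ i, (ψ i).Realize (Sum.elim a (⇑e ∘ d i))

/-- Nonforking independence: `A` is independent from `C` over `B`. -/
def Indep (L : FirstOrder.Language.{0,0}) (M : Type) [L.Structure M] (A B C : Set M) : Prop :=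
  ∀ (n m : ℕ) (a : Fin n → M) (c : Fin m → M), (∀ i, a i ∈ A) → (∀ i, c i ∈ B ∪ C) →
    ∀ φ : L.Formula (Fin n ⊕ Fin m), φ.Realize (Sum.elim a c) → ¬ Forks L M φ c B

/-- `SU(tp(a/B)) ≥ k`. -/
def SUge (L : FirstOrder.Language.{0,0}) : ℕ → ∀ (M : Type) (_ : L.Structure M), M → Set M → Prop
  | 0, _, _, _, _ => True
  | (k+1), M, instM, a, B =>
      letI := instM
      ∃ (N : Type) (instN : L.Structure N),
        letI := instN
        ∃ (e : M ↪ₑ[L] N) (a' : N) (C : Set N),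
          (⇑e '' B) ⊆ C ∧
          SameTypeOver L N (fun _ : Fin 1 => a') (fun _ : Fin 1 => e a) (⇑e '' B) ∧
          ¬ Indep L N {a'} (⇑e '' B) C ∧
          SUge L k N instN a' C

/-- `SU(tp(a/B)) = k`. -/
def SUeq (L : FirstOrder.Language.{0,0}) (M : Type) [instM : L.Structure M] (a : M) (B : Set M) (k : ℕ) :
    Prop :=
  SUge L k M instM a B ∧ ¬ SUge L (k+1) M instM a B

/-- The tree property for a theory. -/
def HasTreeProperty (L : FirstOrder.Language.{0,0}) (T : L.Theory) : Prop :=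
  ∃ (n m k : ℕ) (φ : L.Formula (Fin n ⊕ Fin m)) (N : Type) (instN : L.Structure N),
    letI := instN
    2 ≤ k ∧ N ⊨ T ∧
    ∃ b : List ℕ → Fin m → N,
      (∀ f : ℕ → ℕ, ∃ a : Fin n → N, ∀ l : ℕ,
        φ.Realize (Sum.elim a (b ((List.range l).map f)))) ∧
      (∀ (s : List ℕ) (F : Finset ℕ), F.card = k →
        ¬∃ a : Fin n → N, ∀ i ∈ F, φ.Realize (Sum.elim a (b (s ++ [i]))))

/-- A theory is simple iff no formula has the tree property. -/
def SimpleTheory (L : FirstOrder.Language.{0,0}) (T : L.Theory) : Prop := ¬ HasTreeProperty L T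

/-- 1-basedness (of a structure, e.g. of `M^eq`). -/
def OneBased (L : FirstOrder.Language.{0,0}) (M : Type) [L.Structure M] : Prop :=
  ∀ A B : Set M, Indep L M A (acl L M A ∩ acl L M B) B

/-- Trivial dependence (in a structure, e.g. in `M^eq`). -/
def TrivialDependence (L : FirstOrder.Language.{0,0}) (M : Type) [L.Structure M] : Prop :=
  ∀ A B C₁ C₂ : Set M, ¬ Indep L M A B (C₁ ∪ C₂) → (¬ Indep L M A B C₁ ∨ ¬ Indep L M A B C₂)

/-- `Meq` (with the function `incl` including the real sort, and a sort map `sortOf`)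
is an expansion of `M` by imaginary sorts, i.e. it has the characteristic properties of
`M^eq`. -/
structure IsEqExtension (L : FirstOrder.Language.{0,0}) (M : Type) [L.Structure M]
    (Leq : FirstOrder.Language.{0,0}) (Meq : Type) [Leq.Structure Meq]
    (incl : M → Meq) (SortIdx : Type) (sortOf : Meq → SortIdx) : Prop where
  incl_inj : Function.Injective incl
  real_definable : ZDefSet Leq Meq (Set.range incl)
  expansion : ∀ (n : ℕ) (φ : L.Formula (Fin n)), ∃ ψ : Leq.Formula (Fin n),
      ∀ v : Fin n → M, φ.Realize v ↔ ψ.Realize (incl ∘ v)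
  conservative : ∀ (n : ℕ) (ψ : Leq.Formula (Fin n)), ∃ φ : L.Formula (Fin n),
      ∀ v : Fin n → M, ψ.Realize (incl ∘ v) ↔ φ.Realize v
  sorts_definable : ∀ s : SortIdx, ZDefSet Leq Meq {x | sortOf x = s}
  codes : ∀ e : Meq, ∃ (n : ℕ) (a : Fin n → M), e ∈ dcl Leq Meq (Set.range (incl ∘ a))

/-- `Th(M)` is 1-based: in every imaginary expansion, any two sets are independent over the
intersection of their algebraic closures. -/
def OneBasedStructure (L : FirstOrder.Language.{0,0}) (M : Type) [L.Structure M] : Prop :=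
  ∀ (Leq : FirstOrder.Language.{0,0}) (Meq : Type) (instq : Leq.Structure Meq)
    (incl : M → Meq) (SortIdx : Type) (sortOf : Meq → SortIdx),
    letI := instq
    IsEqExtension L M Leq Meq incl SortIdx sortOf → OneBased Leq Meq

/-- `Th(M)` has trivial dependence (computed in imaginary expansions). -/
def TrivialDependenceStructure (L : FirstOrder.Language.{0,0}) (M : Type) [L.Structure M] : Prop :=
  ∀ (Leq : FirstOrder.Language.{0,0}) (Meq : Type) (instq : Leq.Structure Meq)
    (incl : M → Meq) (SortIdx : Type) (sortOf : Meq → SortIdx),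
    letI := instq
    IsEqExtension L M Leq Meq incl SortIdx sortOf → TrivialDependence Leq Meq

/-- `M` has height 1: there is a ∅-definable set `D` of imaginaries, representing only
finitely many sorts, consisting of elements of SU-rank 1, with `M ⊆ acl(D)`. -/
def HeightOne (L : FirstOrder.Language.{0,0}) (M : Type) [L.Structure M] : Prop :=
  ∀ (Leq : FirstOrder.Language.{0,0}) (Meq : Type) (instq : Leq.Structure Meq)
    (incl : M → Meq) (SortIdx : Type) (sortOf : Meq → SortIdx),
    letI := instq
    IsEqExtension L M Leq Meq incl SortIdx sortOf →
      ∃ D : Set Meq, ZDefSet Leq Meq D ∧ (sortOf '' D).Finite ∧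
        (∀ a : M, incl a ∈ acl Leq Meq D) ∧ ∀ d ∈ D, SUeq Leq Meq d ∅ 1

/-- A binary random structure: an infinite homogeneous binary structure such that no
minimal forbidden structure has at least 3 elements. -/
def IsBinaryRandom (L : FirstOrder.Language.{0,0}) (M : Type) [L.Structure M] : Prop :=
  BinaryLanguage L ∧ Infinite M ∧ Homogeneous L M ∧
  ∀ (A : Type) (instA : L.Structure A),
    letI := instA
    Finite A → 3 ≤ Nat.card A → IsEmpty (A ↪[L] M) →
      ∃ S : L.Substructure A, S ≠ ⊤ ∧ IsEmpty (↥S ↪[L] M)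

/-- `N` (an `LN`-structure) is strongly interpretable in `M` (an `LM`-structure). -/
def StronglyInterpretable (LN : FirstOrder.Language.{0,0}) (N : Type) [LN.Structure N]
    (LM : FirstOrder.Language.{0,0}) (M : Type) [LM.Structure M] : Prop :=
  ∃ (n : ℕ) (χ : LM.Formula (Fin n)) (f : {v : Fin n → M // χ.Realize v} → N),
    Function.Bijective f ∧
    ∀ (k : ℕ) (φ : LN.Formula (Fin k)), ∃ ψ : LM.Formula (Fin k × Fin n),
      ∀ a : Fin k → {v : Fin n → M // χ.Realize v},
        (ψ.Realize (fun p => (a p.1).val p.2) ↔ φ.Realize (fun i => f (a i)))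

/-- Primitivity: every ∅-definable equivalence relation on `M` is trivial. -/
def Primitive (L : FirstOrder.Language.{0,0}) (M : Type) [L.Structure M] : Prop :=
  ∀ E : M → M → Prop, Equivalence E →
    ZDef L M {v : Fin 2 → M | E (v 0) (v 1)} →
    (∀ a b : M, E a b → a = b) ∨ (∀ a b : M, E a b)

/-- The equivalence relation `acl_M(x) = acl_M(y)` on `M`, as a setoid. -/
def aclSetoid (L : FirstOrder.Language.{0,0}) (M : Type) [L.Structure M] : Setoid M :=
  ⟨fun a b => acl L M {a} = acl L M {b},
    ⟨fun _ => rfl, fun h => h.symm, fun h h' => h.trans h'⟩⟩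

/-- The coordinatization (★) of `M` by a chain `C_0 ⊆ C_1 ⊆ ... ⊆ C_r ⊆ C` of ∅-definable
sets of imaginaries. -/
def CoordChain (Leq : FirstOrder.Language.{0,0}) (Meq : Type) [Leq.Structure Meq] {M : Type}
    (incl : M → Meq) {SortIdx : Type} (sortOf : Meq → SortIdx)
    (r : ℕ) (C : Set Meq) (Cn : ℕ → Set Meq) : Prop :=
  ZDefSet Leq Meq C ∧ (∀ n, ZDefSet Leq Meq (Cn n)) ∧ Cn 0 = ∅ ∧
  (∀ n, n < r → Cn n ⊆ Cn (n+1)) ∧ Cn r ⊆ C ∧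
  (∀ a : M, incl a ∈ C) ∧ (sortOf '' C).Finite ∧
  (∀ n, n < r → ∀ a ∈ Cn (n+1), SUeq Leq Meq a (Cn n) 1) ∧
  (∀ n, n ≤ r → ∀ a ∈ Cn n, ∀ b : Meq,
    SameType Leq Meq (fun _ : Fin 1 => a) (fun _ : Fin 1 => b) → b ∈ Cn n) ∧
  (∀ e ∈ C, e ∈ acl Leq Meq (Cn r))


end Paper

/-!
Let `p` be an imaginary of `R^eq` and `X = acl(p) ∩ R`. The imaginary `p` is definable over a
finite tuple `c̄` of real elements, and a homogeneous structure in a finite relational language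
has only finitely many atomic types over `c̄`; real elements of the same atomic type over `c̄`
are conjugate over `c̄`, hence over `p`, so `X` is finite and therefore `p`-definable.

If some `x ∈ X` were not in `dcl(p)`, an algebraic formula over `p` satisfied by `x` with the
fewest solutions yields `x' ≠ x` with the same type over `p`. Enumerate `X` as `b̄` with `x = bᵢ`.
The formula over `p` saying "`x = dᵢ` for some `d̄` in `X` with the atomic diagram of `b̄`" holds
of `x`, hence of `x'`; its witness for `x'` is `b̄ ∘ π` for a permutation `π ≠ 1`, which by
homogeneity has the same type as `b̄`, contradicting the rigidity lemma.
-/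

namespace Paper

section OneParameter

variable {L : FirstOrder.Language.{0,0}} {M : Type} [L.Structure M]

def definedBy (φ : L.Formula (Fin 1 ⊕ Fin 1)) (p : M) : Set M :=
  {x | φ.Realize (Sum.elim (fun _ => x) (fun _ => p))}

theorem mem_acl_singleton_iff {p x : M} :
    x ∈ acl L M {p} ↔
      ∃ φ : L.Formula (Fin 1 ⊕ Fin 1), x ∈ definedBy φ p ∧ (definedBy φ p).Finite := by
  constructor
  · rintro ⟨m, c, hcp, φ, hφ, hfin⟩
    have hc (y : M) : y ∈ definedBy (φ.relabel (Sum.map id fun _ => 0)) p ↔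
        φ.Realize (Sum.elim (fun _ => y) c) := by
      refine Formula.realize_relabel.trans (iff_of_eq (congrArg _ ?_))
      ext (i | i)
      · rfl
      · exact (hcp i).symm
    exact ⟨_, (hc x).2 hφ, by rwa [Set.ext hc]⟩
  · rintro ⟨φ, hx, hfin⟩
    exact ⟨1, fun _ => p, fun _ => rfl, φ, hx, hfin⟩

theorem mem_dcl_singleton_of_definedBy_eq {p x : M} {φ : L.Formula (Fin 1 ⊕ Fin 1)}
    (h : definedBy φ p = {x}) : x ∈ dcl L M {p} :=
  ⟨1, fun _ => p, fun _ => rfl, φ, h⟩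

theorem exists_ne_forall_mem_definedBy_iff {p x : M} (hacl : x ∈ acl L M {p})
    (hdcl : x ∉ dcl L M {p}) :
    ∃ x' ≠ x, ∀ ψ : L.Formula (Fin 1 ⊕ Fin 1), x ∈ definedBy ψ p ↔ x' ∈ definedBy ψ p := by
  classical
  have hex : ∃ n, ∃ φ : L.Formula (Fin 1 ⊕ Fin 1),
      x ∈ definedBy φ p ∧ (definedBy φ p).Finite ∧ (definedBy φ p).ncard = n := by
    obtain ⟨φ, hx, hfin⟩ := mem_acl_singleton_iff.1 hacl
    exact ⟨_, φ, hx, hfin, rfl⟩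
  obtain ⟨φ, hx, hfin, hcard⟩ := Nat.find_spec hex
  obtain ⟨x', hx', hne⟩ : ∃ x' ∈ definedBy φ p, x' ≠ x := by
    by_contra! h
    exact hdcl (mem_dcl_singleton_of_definedBy_eq (Set.eq_singleton_iff_unique_mem.2 ⟨hx, h⟩))
  -- `φ(·, p)` has the fewest solutions among algebraic formulas satisfied by `x`, so it isolates
  -- the type of `x` over `p`
  have forward (ψ : L.Formula (Fin 1 ⊕ Fin 1)) (hψ : x ∈ definedBy ψ p) : x' ∈ definedBy ψ p := by
    have hsub : definedBy (φ ⊓ ψ) p ⊆ definedBy φ p := fun y hy => (Formula.realize_inf.1 hy).1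
    have hmin := Nat.find_min' hex ⟨φ ⊓ ψ, Formula.realize_inf.2 ⟨hx, hψ⟩, hfin.subset hsub, rfl⟩
    rw [← hcard] at hmin
    exact (Formula.realize_inf.1 (Set.eq_of_subset_of_ncard_le hsub hmin hfin ▸ hx')).2
  refine ⟨x', hne, fun ψ => ⟨forward ψ, fun hψ => ?_⟩⟩
  by_contra hx
  exact (forward ψ.not hx) hψ

theorem exists_definedBy_eq_acl_inter {D : Set M} (hD : ZDefSet L M D) {p : M}
    (hfin : (acl L M {p} ∩ D).Finite) :
    ∃ φ : L.Formula (Fin 1 ⊕ Fin 1), definedBy φ p = acl L M {p} ∩ D := by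
  obtain ⟨ρ, hρ⟩ := hD
  have : Finite ↑(acl L M {p} ∩ D) := hfin.to_subtype
  choose φ hφ using fun u : ↑(acl L M {p} ∩ D) => mem_acl_singleton_iff.1 u.2.1
  refine ⟨Formula.iSup φ ⊓ ρ.relabel (fun _ => Sum.inl 0), Set.ext fun y => ?_⟩
  simp only [definedBy, Set.mem_ofPred_eq, Formula.realize_inf, Formula.realize_iSup,
    Formula.realize_relabel, Function.comp_def, Sum.elim_inl, ← hρ]
  constructor
  · rintro ⟨⟨u, hu⟩, hyD⟩
    exact ⟨mem_acl_singleton_iff.2 ⟨φ u, hu, (hφ u).2⟩, hyD⟩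
  · intro hy
    exact ⟨⟨⟨y, hy⟩, (hφ ⟨y, hy⟩).1⟩, hy.2⟩

theorem mem_definedBy_of_sameType {m : ℕ} {c : Fin m → M} {θ : L.Formula (Fin 1 ⊕ Fin m)}
    {p : M} (hθ : {z | θ.Realize (Sum.elim (fun _ => z) c)} = {p}) {x y : M}
    (hxy : SameType L M (Sum.elim (fun _ : Fin 1 => x) c) (Sum.elim (fun _ => y) c))
    {ψ : L.Formula (Fin 1 ⊕ Fin 1)} (hx : x ∈ definedBy ψ p) : y ∈ definedBy ψ p := by
  -- `χ(w, c) := ∃ z, θ(z, c) ∧ ψ(w, z)` says `ψ(w, p)`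
  let χ : L.Formula (Fin 1 ⊕ Fin m) := Formula.iExs (Fin 1)
    (θ.relabel (Sum.elim (fun _ => Sum.inr 0) (Sum.inl ∘ Sum.inr)) ⊓
      ψ.relabel (Sum.elim (fun _ => Sum.inl (Sum.inl 0)) (fun _ => Sum.inr 0)))
  have hχ (w : M) : χ.Realize (Sum.elim (fun _ => w) c) ↔ w ∈ definedBy ψ p := by
    have hθ' (z : M) : θ.Realize (Sum.elim (fun _ => z) c) ↔ z = p := Set.ext_iff.1 hθ z
    simp only [χ, Formula.realize_iExs, Formula.realize_inf, Formula.realize_relabel,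
      Sum.comp_elim, ← Function.comp_assoc, Sum.elim_comp_inl, Sum.elim_comp_inr]
    simp only [Function.comp_def, Sum.elim_inl, Sum.elim_inr, hθ']
    exact ⟨fun ⟨i, hi, h⟩ => hi ▸ h, fun h => ⟨fun _ => p, rfl, h⟩⟩
  exact (hχ y).1 ((hxy χ).1 ((hχ x).2 hx))

end OneParameter

section AtomicType

variable (L : FirstOrder.Language.{0,0}) {M : Type} [L.Structure M] {ι : Type}

def atomicType (v : ι → M) : (ι × ι → Prop) × ((Σ n, L.Relations n × (Fin n → ι)) → Prop) :=
  (fun e => v e.1 = v e.2, fun a => Structure.RelMap a.2.1 (v ∘ a.2.2))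

variable {L}

theorem FiniteRelational.finite_atoms (hL : FiniteRelational L) [Finite ι] :
    Finite (Σ n, L.Relations n × (Fin n → ι)) := by
  have := hL.2.2.to_subtype
  have := hL.2.1
  exact Finite.of_surjective
    (fun a : Σ n : {n | Nonempty (L.Relations n)}, L.Relations n × (Fin n → ι) => ⟨a.1, a.2⟩)
    fun ⟨n, r, s⟩ => ⟨⟨⟨n, ⟨r⟩⟩, r, s⟩, rfl⟩

theorem exists_formula_realize_iff_atomicType_eq (hL : FiniteRelational L) [Finite ι]
    (v : ι → M) :
    ∃ φ : L.Formula ι, ∀ w : ι → M, φ.Realize w ↔ atomicType L w = atomicType L v := by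
  classical
  have := hL.finite_atoms (ι := ι)
  let literal (φ : L.Formula ι) (P : Prop) : L.Formula ι := if P then φ else φ.not
  have realize_literal (φ : L.Formula ι) (P : Prop) (w : ι → M) :
      (literal φ P).Realize w ↔ (φ.Realize w ↔ P) := by
    by_cases hP : P <;> simp [literal, hP]
  refine ⟨Formula.iInf (fun e : ι × ι =>
      literal (Term.equal (var e.1) (var e.2)) (v e.1 = v e.2)) ⊓
    Formula.iInf (fun a : Σ n, L.Relations n × (Fin n → ι) =>
      literal (a.2.1.formula (fun i => var (a.2.2 i))) (Structure.RelMap a.2.1 (v ∘ a.2.2))),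
    fun w => ?_⟩
  simp only [Formula.realize_inf, Formula.realize_iInf, realize_literal, Formula.realize_equal,
    Formula.realize_rel, Term.realize_var, atomicType, Prod.mk.injEq, funext_iff, eq_iff_iff]
  rfl

theorem sameType_of_atomicType_eq (hfun : ∀ n, IsEmpty (L.Functions n))
    (hhom : Homogeneous L M) [Finite ι] {v w : ι → M} (h : atomicType L v = atomicType L w) :
    SameType L M v w := by
  have hker : ∀ i j, v i = v j ↔ w i = w j := fun i j =>
    iff_of_eq (congrFun (congrArg Prod.fst h) (i, j))
  have hrel : ∀ n (r : L.Relations n) (s : Fin n → ι),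
      Structure.RelMap r (v ∘ s) ↔ Structure.RelMap r (w ∘ s) := fun n r s =>
    iff_of_eq (congrFun (congrArg Prod.snd h) ⟨n, r, s⟩)
  let substructureRange (u : ι → M) : L.Substructure M :=
    ⟨Set.range u, fun {n} f => (hfun n).elim f⟩
  let e : substructureRange v ≃ substructureRange w :=
    (Setoid.quotientKerEquivRange v).symm.trans
      ((Quotient.congrRight hker).trans (Setoid.quotientKerEquivRange w))
  have he (i : ι) : (e ⟨v i, i, rfl⟩ : M) = w i := by
    have : (Setoid.quotientKerEquivRange v).symm ⟨v i, i, rfl⟩ = ⟦i⟧ :=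
      (Equiv.symm_apply_eq _).2 (Subtype.ext rfl)
    simp only [e, Equiv.trans_apply, this]
    rfl
  let f : substructureRange v ≃[L] substructureRange w :=
    { toEquiv := e
      map_fun' := fun {n} F => (hfun n).elim F
      map_rel' := by
        intro n r u
        choose s hs using fun k => (u k).2
        have hu : Subtype.val ∘ u = v ∘ s := funext fun k => (hs k).symm
        have heu : Subtype.val ∘ (e ∘ u) = w ∘ s := funext fun k => by
          have : u k = ⟨v (s k), s k, rfl⟩ := Subtype.ext (hs k).symm
          simp only [Function.comp_apply, this, he]
        change Structure.RelMap r (Subtype.val ∘ (e ∘ u)) ↔ Structure.RelMap r (Subtype.val ∘ u)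
        rw [hu, heu]
        exact (hrel n r s).symm }
  obtain ⟨g, hg⟩ := hhom _ _ (Set.finite_range v) (Set.finite_range w) f
  have hgv : g ∘ v = w := funext fun i => (hg ⟨v i, i, rfl⟩).trans (he i)
  intro φ
  rw [← hgv, StrongHomClass.realize_formula]

end AtomicType

section EqExtension

variable {LR : FirstOrder.Language.{0,0}} {R : Type} [LR.Structure R]
  {Leq : FirstOrder.Language.{0,0}} {Meq : Type} [Leq.Structure Meq]
  {incl : R → Meq} {SortIdx : Type} {sortOf : Meq → SortIdx}

theorem IsEqExtension.sameType_comp (heq : IsEqExtension LR R Leq Meq incl SortIdx sortOf)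
    {α : Type} [Finite α] {v w : α → R} (h : SameType LR R v w) :
    SameType Leq Meq (incl ∘ v) (incl ∘ w) := by
  intro ψ
  obtain ⟨n, ⟨e⟩⟩ := Finite.exists_equiv_fin α
  obtain ⟨φ, hφ⟩ := heq.conservative n (ψ.relabel e)
  have key (u : α → R) : ψ.Realize (incl ∘ u) ↔ (φ.relabel e.symm).Realize u := by
    rw [Formula.realize_relabel, ← hφ, Formula.realize_relabel]
    exact iff_of_eq (congrArg _ (funext fun i => by simp))
  rw [key, key]
  exact h _

theorem IsEqExtension.finite_acl_inter_range (hLR : FiniteRelational LR)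
    (hhom : Homogeneous LR R) (heq : IsEqExtension LR R Leq Meq incl SortIdx sortOf) (p : Meq) :
    (acl Leq Meq {p} ∩ Set.range incl).Finite := by
  obtain ⟨n, a, m, c, hc, θ, hθ⟩ := heq.codes p
  choose κ hκ using hc
  obtain rfl : c = incl ∘ (a ∘ κ) := funext fun i => (hκ i).symm
  have := hLR.finite_atoms (ι := Fin 1 ⊕ Fin m)
  let Y := {y : R | incl y ∈ acl Leq Meq {p}}
  let τ (y : R) := atomicType LR (Sum.elim (fun _ : Fin 1 => y) (a ∘ κ))
  -- `p` is definable over `a ∘ κ`, so real elements with the same atomic type over `a ∘ κ`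
  -- have the same type over `p`
  have hfiber (t) : (Y ∩ τ ⁻¹' {t}).Finite := by
    rcases (Y ∩ τ ⁻¹' {t}).eq_empty_or_nonempty with h | ⟨x, hxY, hxt⟩
    · exact h ▸ Set.finite_empty
    obtain ⟨ψ, hψ, hψfin⟩ := mem_acl_singleton_iff.1 hxY
    refine Set.Finite.of_finite_image (hψfin.subset ?_) heq.incl_inj.injOn
    rintro _ ⟨y, ⟨-, hyt⟩, rfl⟩
    have hxy := heq.sameType_comp (sameType_of_atomicType_eq hLR.1 hhom (hxt.trans hyt.symm))
    rw [Sum.comp_elim, Sum.comp_elim] at hxy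
    exact mem_definedBy_of_sameType hθ hxy hψ
  have hY : Y.Finite :=
    (Set.finite_iUnion hfiber).subset fun y hy => Set.mem_iUnion.2 ⟨τ y, hy, rfl⟩
  refine (hY.image incl).subset ?_
  rintro _ ⟨hx, y, rfl⟩
  exact ⟨y, hx, rfl⟩

theorem IsEqExtension.exists_perm_ne_one_sameType (hLR : FiniteRelational LR)
    (hhom : Homogeneous LR R) (heq : IsEqExtension LR R Leq Meq incl SortIdx sortOf) {p : Meq}
    {m : ℕ} {b : Fin m → R} (hb : Function.Injective b)
    (hrange : Set.range (incl ∘ b) = acl Leq Meq {p} ∩ Set.range incl) {i : Fin m} {x' : Meq}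
    (hne : x' ≠ incl (b i))
    (htp : ∀ ψ : Leq.Formula (Fin 1 ⊕ Fin 1), incl (b i) ∈ definedBy ψ p → x' ∈ definedBy ψ p) :
    ∃ π : Equiv.Perm (Fin m), π ≠ 1 ∧ SameType LR R b (b ∘ π) := by
  obtain ⟨φX, hφX⟩ :=
    exists_definedBy_eq_acl_inter heq.real_definable (hrange ▸ Set.finite_range _)
  rw [← hrange] at hφX
  obtain ⟨D, hD⟩ := exists_formula_realize_iff_atomicType_eq hLR b
  obtain ⟨ψD, hψD⟩ := heq.expansion m D
  let χ : Leq.Formula (Fin 1 ⊕ Fin 1) := Formula.iExs (Fin m)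
    (ψD.relabel Sum.inr ⊓
      Formula.iInf (fun k =>
        φX.relabel (Sum.elim (fun _ => Sum.inr k) (fun _ => Sum.inl (Sum.inr 0)))) ⊓
      Term.equal (var (Sum.inl (Sum.inl 0))) (var (Sum.inr i)))
  have hχ (x : Meq) : x ∈ definedBy χ p ↔
      ∃ d : Fin m → Meq, ψD.Realize d ∧ (∀ k, d k ∈ definedBy φX p) ∧ x = d i := by
    simp only [χ, definedBy, Set.mem_ofPred_eq, Formula.realize_iExs, Formula.realize_inf,
      Formula.realize_relabel, Formula.realize_iInf, Formula.realize_equal, Term.realize_var,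
      Sum.comp_elim, Sum.elim_comp_inr]
    simp only [Function.comp_def, Sum.elim_inl, Sum.elim_inr, and_assoc]
  have hbχ : incl (b i) ∈ definedBy χ p :=
    (hχ _).2 ⟨incl ∘ b, (hψD b).1 ((hD b).2 rfl), fun k => hφX ▸ ⟨k, rfl⟩, rfl⟩
  obtain ⟨d, hdD, hdX, rfl⟩ := (hχ x').1 (htp χ hbχ)
  choose π₀ hπ₀ using fun k => hφX ▸ hdX k
  obtain rfl : d = incl ∘ (b ∘ π₀) := funext fun k => (hπ₀ k).symm
  have hτ : atomicType LR (b ∘ π₀) = atomicType LR b := (hD _).1 ((hψD _).2 hdD)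
  have hinj : Function.Injective π₀ := fun k l hkl =>
    hb ((iff_of_eq (congrFun (congrArg Prod.fst hτ) (k, l))).1 (congrArg b hkl))
  refine ⟨Equiv.ofBijective π₀ (Finite.injective_iff_bijective.1 hinj), fun h => hne ?_,
    sameType_of_atomicType_eq hLR.1 hhom hτ.symm⟩
  rw [Function.comp_apply, Function.comp_apply, show π₀ i = i from DFunLike.congr_fun h i]

theorem IsEqExtension.acl_inter_range_subset_dcl (hLR : FiniteRelational LR)
    (hhom : Homogeneous LR R) (heq : IsEqExtension LR R Leq Meq incl SortIdx sortOf) (p : Meq)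
    (hrigid : ∀ (m : ℕ) (b : Fin m → R), Function.Injective b →
      Set.range (incl ∘ b) = acl Leq Meq {p} ∩ Set.range incl →
      ∀ π : Equiv.Perm (Fin m), π ≠ 1 → ¬ SameType LR R b (b ∘ π)) :
    acl Leq Meq {p} ∩ Set.range incl ⊆ dcl Leq Meq {p} := by
  intro x hx
  by_contra hdcl
  obtain ⟨x', hne, htp⟩ := exists_ne_forall_mem_definedBy_iff hx.1 hdcl
  obtain ⟨m, b, hb, hrange⟩ :=
    ((heq.finite_acl_inter_range hLR hhom p).preimage heq.incl_inj.injOn).fin_param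
  replace hrange : Set.range (incl ∘ b) = acl Leq Meq {p} ∩ Set.range incl := by
    rw [Set.range_comp, hrange, Set.image_preimage_eq_of_subset Set.inter_subset_right]
  obtain ⟨i, rfl⟩ := hrange ▸ hx
  obtain ⟨π, hπ, hsame⟩ :=
    heq.exists_perm_ne_one_sameType hLR hhom hb hrange hne fun ψ => (htp ψ).1
  exact hrigid m b hb hrange π hπ hsame

end EqExtension

end Paper

theorem statement16_general (M : Type)
    (LR : FirstOrder.Language.{0,0}) (R : Type) [LR.Structure R]
    (hR : Paper.IsBinaryRandom LR R)
    (LeqR : FirstOrder.Language.{0,0}) (MeqR : Type) [LeqR.Structure MeqR]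
    (inclR : R → MeqR) (SortIdx : Type) (sortOf : MeqR → SortIdx)
    (heqR : Paper.IsEqExtension LR R LeqR MeqR inclR SortIdx sortOf)
    (j : M → MeqR)
    -- the rigidity lemma
    (hrigid : ∀ (a : M) (m : ℕ) (b : Fin m → R), Function.Injective b →
      Set.range (inclR ∘ b) = Paper.acl LeqR MeqR {j a} ∩ Set.range inclR →
      ∀ π : Equiv.Perm (Fin m), π ≠ 1 → ¬ Paper.SameType LR R b (b ∘ π)) :
    ∀ a : M,
      Paper.acl LeqR MeqR {j a} ∩ Set.range inclR ⊆ Paper.dcl LeqR MeqR {j a} := fun a =>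
  heqR.acl_inter_range_subset_dcl hR.1.1 hR.2.2.1 (j a) (hrigid a)

/-- For every `a ∈ M`, `crd(a) ⊆ dcl_{R^eq}(a)`. -/
theorem statement16 (L : FirstOrder.Language.{0,0}) (M : Type) [L.Structure M]
    (hcount : Countable M) (hbin : Paper.BinaryLanguage L) (hhom : Paper.Homogeneous L M)
    (hsimple : Paper.SimpleTheory L (L.completeTheory M))
    (h1b : Paper.OneBasedStructure L M)
    (hsing : ∀ a b : M, Paper.acl L M {a} = Paper.acl L M {b} → a = b)
    (LR : FirstOrder.Language.{0,0}) (R : Type) [LR.Structure R]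
    (hR : Paper.IsBinaryRandom LR R)
    (LeqR : FirstOrder.Language.{0,0}) (MeqR : Type) [LeqR.Structure MeqR]
    (inclR : R → MeqR) (SortIdx : Type) (sortOf : MeqR → SortIdx)
    (heqR : Paper.IsEqExtension LR R LeqR MeqR inclR SortIdx sortOf)
    (j : M → MeqR) (hjinj : Function.Injective j)
    (hjdef : Paper.ZDefSet LeqR MeqR (Set.range j))
    (hjred : ∀ (n : ℕ) (a b : Fin n → M),
      Paper.SameType LeqR MeqR (j ∘ a) (j ∘ b) → Paper.SameType L M a b)
    (hdcl : ∀ a : M,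
      j a ∈ Paper.dcl LeqR MeqR (Paper.acl LeqR MeqR {j a} ∩ Set.range inclR))
    -- the rigidity lemma
    (hrigid : ∀ (a : M) (m : ℕ) (b : Fin m → R), Function.Injective b →
      Set.range (inclR ∘ b) = Paper.acl LeqR MeqR {j a} ∩ Set.range inclR →
      ∀ π : Equiv.Perm (Fin m), π ≠ 1 → ¬ Paper.SameType LR R b (b ∘ π)) :
    ∀ a : M,
      Paper.acl LeqR MeqR {j a} ∩ Set.range inclR ⊆ Paper.dcl LeqR MeqR {j a} :=
  statement16_general M LR R hR LeqR MeqR inclR SortIdx sortOf heqR j hrigid
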